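/- Let E be a vector space with inner product ⟨·,·⟩, and suppose E = ker(D*) ⊕ D(E) and E = ker(D) ⊕ D*(E) as orthogonal decompositions, where D, D*: E → E are adjoint operators. Suppose σ: E → E' is an antilinear bijection to a space E' with an operator D' satisfying D' = −c·σD*σ^{-1} for some c ≠ 0. Then the pairing b(e, σ(e')) on (E/D(E)) × ker(D') induced by the inner product is perfect, i.e. σ maps ker(D*) bijectively onto ker(D') and ker(D*) ≅ coker(D). -/

import Mathlib

open LinearMap

/-- Abstract Serre-duality setup: `E` is an inner product space with operators
`D`, `Dstar` adjoint to each other, with orthogonal decompositions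
`E = ker(Dstar) ⊕ D(E)` and `E = ker(D) ⊕ Dstar(E)`. If `σ : E → E'` is an
antilinear bijection and `D' : E' → E'` satisfies `D' σ = −c·σ Dstar` for some
`c ≠ 0`, then `σ` maps `ker(Dstar)` bijectively onto `ker(D')`, and
`ker(Dstar) ≅ coker(D)`; hence the pairing `b(e, σ(e')) = ⟨e, e'⟩` induces a
perfect pairing between `coker(D)` and `ker(D')`. -/
theorem stmt17 {E E' : Type*}
    [NormedAddCommGroup E] [InnerProductSpace ℂ E]
    [AddCommGroup E'] [Module ℂ E']
    (D Dstar : E →ₗ[ℂ] E)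
    (hadj : ∀ x y : E, inner ℂ (D x) y = (inner ℂ x (Dstar y) : ℂ))
    (hdec1 : ker Dstar ⊓ range D = ⊥ ∧ ker Dstar ⊔ range D = ⊤ ∧
      ∀ x ∈ ker Dstar, ∀ y ∈ range D, (inner ℂ x y : ℂ) = 0)
    (hdec2 : ker D ⊓ range Dstar = ⊥ ∧ ker D ⊔ range Dstar = ⊤ ∧
      ∀ x ∈ ker D, ∀ y ∈ range Dstar, (inner ℂ x y : ℂ) = 0)
    (σ : E →ₗ⋆[ℂ] E') (hσ : Function.Bijective σ)
    (D' : E' →ₗ[ℂ] E') (c : ℂ) (hc : c ≠ 0)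
    (hcomm : ∀ e : E, D' (σ e) = -c • σ (Dstar e)) :
    Set.BijOn σ (ker Dstar : Set E) (ker D' : Set E') ∧
      Nonempty ((ker Dstar) ≃ₗ[ℂ] (E ⧸ range D)) := by
  obtain ⟨h1, h2, -⟩ := hdec1
  constructor
  · refine ⟨?_, fun x _ y _ hxy => hσ.1 hxy, ?_⟩
    · rintro x hx
      have hx0 : Dstar x = 0 := hx
      show σ x ∈ ker D'
      rw [LinearMap.mem_ker, hcomm x, hx0]
      simp
    · rintro y hy
      obtain ⟨x, rfl⟩ := hσ.2 y
      have : D' (σ x) = 0 := hy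
      rw [hcomm x] at this
      have h0 : σ (Dstar x) = 0 := by
        rcases smul_eq_zero.mp this with h | h
        · exact absurd (neg_eq_zero.mp h) hc
        · exact h
      have hx : Dstar x = 0 := hσ.1 (by simpa using h0)
      exact ⟨x, hx, rfl⟩
  · have hcompl : IsCompl (range D) (ker Dstar) := by
      constructor
      · rw [disjoint_iff]
        rw [inf_comm] at h1
        exact h1
      · rw [codisjoint_iff]
        rw [sup_comm] at h2
        exact h2
    exact ⟨(Submodule.quotientEquivOfIsCompl _ _ hcompl).symm⟩
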